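/- arXiv:2601.18221 — 2 statements merged into one kernel-verified Lean document; each statement's English description precedes it below -/
import Mathlib

section
/- For every τ in the upper half-plane ℍ and every v ∈ ℂ, the Jacobi theta function θ₁ satisfies the imaginary transformation law θ₁(v, −1/τ) = (τ/i)^{1/2} · e^{πiτv²} · θ₂(τv, τ). -/
open Complex

noncomputable def JThetaFactor (v τ : ℂ) (n : ℕ) : ℂ :=
  (1 - Complex.exp (2 * (Real.pi : ℂ) * I * τ) ^ (n + 1)) *
  (1 - Complex.exp (2 * (Real.pi : ℂ) * I * v) * Complex.exp (2 * (Real.pi : ℂ) * I * τ) ^ (n + 1)) *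
  (1 - Complex.exp (-(2 * (Real.pi : ℂ) * I * v)) * Complex.exp (2 * (Real.pi : ℂ) * I * τ) ^ (n + 1))

/-- The Jacobi theta function θ(v, τ). -/
noncomputable def JTheta (v τ : ℂ) : ℂ :=
  2 * Complex.exp (2 * (Real.pi : ℂ) * I * τ / 8) * Complex.sin ((Real.pi : ℂ) * v) *
    ∏' n : ℕ, JThetaFactor v τ n

noncomputable def JTheta1Factor (v τ : ℂ) (n : ℕ) : ℂ :=
  (1 - Complex.exp (2 * (Real.pi : ℂ) * I * τ) ^ (n + 1)) *
  (1 + Complex.exp (2 * (Real.pi : ℂ) * I * v) * Complex.exp (2 * (Real.pi : ℂ) * I * τ) ^ (n + 1)) *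
  (1 + Complex.exp (-(2 * (Real.pi : ℂ) * I * v)) * Complex.exp (2 * (Real.pi : ℂ) * I * τ) ^ (n + 1))

/-- The Jacobi theta function θ₁(v, τ). -/
noncomputable def JTheta1 (v τ : ℂ) : ℂ :=
  2 * Complex.exp (2 * (Real.pi : ℂ) * I * τ / 8) * Complex.cos ((Real.pi : ℂ) * v) *
    ∏' n : ℕ, JTheta1Factor v τ n

noncomputable def JTheta2Factor (v τ : ℂ) (n : ℕ) : ℂ :=
  (1 - Complex.exp (2 * (Real.pi : ℂ) * I * τ) ^ (n + 1)) *
  (1 - Complex.exp (2 * (Real.pi : ℂ) * I * v) * Complex.exp (2 * (Real.pi : ℂ) * I * τ * ((n : ℂ) + 1 / 2))) *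
  (1 - Complex.exp (-(2 * (Real.pi : ℂ) * I * v)) * Complex.exp (2 * (Real.pi : ℂ) * I * τ * ((n : ℂ) + 1 / 2)))

/-- The Jacobi theta function θ₂(v, τ). -/
noncomputable def JTheta2 (v τ : ℂ) : ℂ := ∏' n : ℕ, JTheta2Factor v τ n

noncomputable def JTheta3Factor (v τ : ℂ) (n : ℕ) : ℂ :=
  (1 - Complex.exp (2 * (Real.pi : ℂ) * I * τ) ^ (n + 1)) *
  (1 + Complex.exp (2 * (Real.pi : ℂ) * I * v) * Complex.exp (2 * (Real.pi : ℂ) * I * τ * ((n : ℂ) + 1 / 2))) *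
  (1 + Complex.exp (-(2 * (Real.pi : ℂ) * I * v)) * Complex.exp (2 * (Real.pi : ℂ) * I * τ * ((n : ℂ) + 1 / 2)))

/-- The Jacobi theta function θ₃(v, τ). -/
noncomputable def JTheta3 (v τ : ℂ) : ℂ := ∏' n : ℕ, JTheta3Factor v τ n

/-!
Both sides are values of Mathlib's `jacobiTheta₂`, `ϑ(z, τ) = ∑ₙ exp(2πinz + πin²τ)`: by the
Jacobi triple product, `θ₂(z, τ) = ϑ(z + 1/2, τ)` and
`θ₁(z, τ) = q^{1/8} e^{πiz} ϑ(z + τ/2, τ)`, so the transformation law is the functional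
equation `jacobiTheta₂_functional_equation` of `ϑ` (Poisson summation) at `z = τv - 1/2`.

The triple product is the limit `N → ∞` of its finite form
`∏_{j<N} (1 + xQ^{2j+1})(1 + x⁻¹Q^{2j+1}) = ∑_{|n| ≤ N} [2N, N+n]_{Q²} Q^{n²} xⁿ`,
a case of the `q`-binomial theorem. The Gaussian binomials `[2N, N+n]_q` are uniformly bounded
and tend to `1 / ∏ₖ (1 - q^{k+1})`, so Tannery's theorem passes to the limit.
-/

open Finset Filter Topology
open scoped Real

lemma choose_two_succ (k : ℕ) : (k + 1).choose 2 = k + k.choose 2 := by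
  rw [Nat.choose_succ_succ', Nat.choose_one_right]

lemma sum_range_two_mul_add_one (N : ℕ) : ∑ j ∈ range N, (2 * j + 1) = N ^ 2 := by
  induction N with
  | zero => simp
  | succ N ih => rw [sum_range_succ, ih]; ring

lemma two_mul_choose_two_add_self (k : ℕ) : 2 * k.choose 2 + k = k ^ 2 := by
  induction k with
  | zero => simp
  | succ k ih =>
    rw [choose_two_succ]
    linear_combination ih

section QBinomial

variable {R : Type*} [CommRing R]

def qFactorial (q : R) (n : ℕ) : R := ∏ i ∈ range n, (1 - q ^ (i + 1))

lemma qFactorial_succ (q : R) (n : ℕ) :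
    qFactorial q (n + 1) = qFactorial q n * (1 - q ^ (n + 1)) :=
  prod_range_succ _ _

-- The truncated `m - k` only matters for `k > m`, where it multiplies `qBinomial q m k = 0`.
def qBinomial (q : R) : ℕ → ℕ → R
  | _, 0 => 1
  | 0, _ + 1 => 0
  | m + 1, k + 1 => qBinomial q m (k + 1) + q ^ (m - k) * qBinomial q m k

@[simp] lemma qBinomial_zero_right (q : R) (m : ℕ) : qBinomial q m 0 = 1 := by
  cases m <;> rfl

lemma qBinomial_succ_succ (q : R) (m k : ℕ) :
    qBinomial q (m + 1) (k + 1) = qBinomial q m (k + 1) + q ^ (m - k) * qBinomial q m k := rfl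

lemma qBinomial_eq_zero_of_lt (q : R) : ∀ {m k : ℕ}, m < k → qBinomial q m k = 0
  | 0, _ + 1, _ => rfl
  | m + 1, k + 1, h => by
    rw [qBinomial_succ_succ, qBinomial_eq_zero_of_lt q (by omega : m < k + 1),
      qBinomial_eq_zero_of_lt q (by omega : m < k), mul_zero, add_zero]

lemma qBinomial_self (q : R) : ∀ m : ℕ, qBinomial q m m = 1
  | 0 => rfl
  | m + 1 => by
    rw [qBinomial_succ_succ, qBinomial_eq_zero_of_lt q m.lt_succ_self, Nat.sub_self, pow_zero,
      one_mul, zero_add, qBinomial_self q m]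

lemma qBinomial_add_mul_qFactorial (q : R) : ∀ a b : ℕ,
    qBinomial q (a + b) a * (qFactorial q a * qFactorial q b) = qFactorial q (a + b)
  | 0, b => by simp [qFactorial]
  | a + 1, 0 => by simp [qBinomial_self, qFactorial]
  | a + 1, b + 1 => by
    have h₁ := qBinomial_add_mul_qFactorial q (a + 1) b
    have h₂ := qBinomial_add_mul_qFactorial q a (b + 1)
    rw [show a + 1 + b = a + b + 1 by omega, qFactorial_succ q a] at h₁
    rw [show a + (b + 1) = a + b + 1 by omega, qFactorial_succ q b] at h₂
    rw [show a + 1 + (b + 1) = a + b + 1 + 1 by omega, qBinomial_succ_succ,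
      show a + b + 1 - a = b + 1 by omega, qFactorial_succ q (a + b + 1), qFactorial_succ q a,
      qFactorial_succ q b]
    linear_combination (1 - q ^ (b + 1)) * h₁ + q ^ (b + 1) * (1 - q ^ (a + 1)) * h₂

theorem prod_one_add_mul_pow_eq_sum_qBinomial (q z : R) (M : ℕ) :
    ∏ j ∈ range M, (1 + z * q ^ j) =
      ∑ k ∈ range (M + 1), q ^ k.choose 2 * qBinomial q M k * z ^ k := by
  induction M with
  | zero => simp
  | succ M ih =>
    have hshift := sum_range_succ' (fun k => q ^ k.choose 2 * qBinomial q M k * z ^ k) (M + 1)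
    rw [sum_range_succ, qBinomial_eq_zero_of_lt q M.lt_succ_self] at hshift
    simp only [mul_zero, zero_mul, add_zero, qBinomial_zero_right, Nat.choose_zero_succ, pow_zero,
      mul_one] at hshift
    rw [prod_range_succ, ih, sum_range_succ' _ (M + 1)]
    simp only [qBinomial_succ_succ]
    have hcarry : ∀ k ∈ range (M + 1), q ^ (k + 1).choose 2 * (q ^ (M - k) * qBinomial q M k) *
        z ^ (k + 1) = z * q ^ M * (q ^ k.choose 2 * qBinomial q M k * z ^ k) := by
      intro k hk
      have hkM : (k + 1).choose 2 + (M - k) = k.choose 2 + M := by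
        have := mem_range.mp hk
        rw [choose_two_succ]
        omega
      rw [← mul_assoc, ← pow_add, hkM, pow_add, pow_succ]
      ring
    simp only [mul_add, add_mul, sum_add_distrib, sum_congr rfl hcarry, ← mul_sum]
    simp only [qBinomial_zero_right, Nat.choose_zero_succ, pow_zero, mul_one]
    linear_combination hshift

end QBinomial

section FiniteTripleProduct

variable {K : Type*} [Field K] {Q x : K}

lemma prod_one_add_mul_pow_range_two_mul (hQ : Q ≠ 0) (hx : x ≠ 0) (N : ℕ) :
    ∏ j ∈ range (2 * N), (1 + x * Q / Q ^ (2 * N) * (Q ^ 2) ^ j) =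
      x ^ N / Q ^ (N ^ 2) *
        ∏ j ∈ range N, (1 + x * Q ^ (2 * j + 1)) * (1 + x⁻¹ * Q ^ (2 * j + 1)) := by
  have hlow : ∀ j ∈ range N, 1 + x * Q / Q ^ (2 * N) * (Q ^ 2) ^ (N - 1 - j) =
      x / Q ^ (2 * j + 1) * (1 + x⁻¹ * Q ^ (2 * j + 1)) := by
    intro j hj
    obtain ⟨m, rfl⟩ : ∃ m, N = j + 1 + m := ⟨N - 1 - j, by have := mem_range.mp hj; omega⟩
    rw [show j + 1 + m - 1 - j = m by omega]
    field_simp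
    ring
  have hhigh : ∀ j ∈ range N,
      1 + x * Q / Q ^ (2 * N) * (Q ^ 2) ^ (N + j) = 1 + x * Q ^ (2 * j + 1) := by
    intro j _
    field_simp
    ring
  rw [show range (2 * N) = range (N + N) by rw [two_mul], prod_range_add, ← prod_range_reflect,
    prod_congr rfl hlow, prod_congr rfl hhigh, prod_mul_distrib, prod_div_distrib, prod_const,
    card_range, prod_pow_eq_pow_sum, sum_range_two_mul_add_one, prod_mul_distrib]
  ring

lemma sum_qBinomial_range_two_mul (hQ : Q ≠ 0) (hx : x ≠ 0) (N : ℕ) :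
    ∑ k ∈ range (2 * N + 1),
        (Q ^ 2) ^ k.choose 2 * qBinomial (Q ^ 2) (2 * N) k * (x * Q / Q ^ (2 * N)) ^ k =
      x ^ N / Q ^ (N ^ 2) * ∑ n ∈ Icc (-N : ℤ) N,
        qBinomial (Q ^ 2) (2 * N) (n + N).toNat * (Q ^ (n ^ 2) * x ^ n) := by
  rw [mul_sum]
  refine sum_nbij' (fun k => (k : ℤ) - N) (fun n => (n + N).toNat) ?_ ?_ ?_ ?_ fun k hk => ?_
  · intro k hk; simp at hk ⊢; omega
  · intro n hn; simp at hn ⊢; omega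
  · intro k _; simp
  · intro n hn; simp at hn ⊢; omega
  have hk : ((k : ℤ) - N + N).toNat = k := by omega
  have hxk : x ^ ((k : ℤ) - N) = x ^ k / x ^ N := by
    rw [zpow_sub₀ hx, zpow_natCast, zpow_natCast]
  have hQk : Q ^ (((k : ℤ) - N) ^ 2) = Q ^ (k ^ 2 + N ^ 2) / Q ^ (2 * k * N) := by
    rw [← zpow_natCast, ← zpow_natCast, ← zpow_sub₀ hQ]; push_cast; ring_nf
  rw [hk, hxk, hQk, ← two_mul_choose_two_add_self k]
  simp only [div_pow, mul_pow, ← pow_mul]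
  field_simp
  ring

-- The `q`-binomial theorem at `q = Q²`, `z = xQ^{1-2N}`, `M = 2N`, rescaled by `x^N / Q^{N²}`.
theorem prod_one_add_mul_pow_odd_eq_sum (hQ : Q ≠ 0) (hx : x ≠ 0) (N : ℕ) :
    ∏ j ∈ range N, (1 + x * Q ^ (2 * j + 1)) * (1 + x⁻¹ * Q ^ (2 * j + 1)) =
      ∑ n ∈ Icc (-N : ℤ) N,
        qBinomial (Q ^ 2) (2 * N) (n + N).toNat * (Q ^ (n ^ 2) * x ^ n) := by
  have h := prod_one_add_mul_pow_eq_sum_qBinomial (Q ^ 2) (x * Q / Q ^ (2 * N)) (2 * N)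
  rw [prod_one_add_mul_pow_range_two_mul hQ hx, sum_qBinomial_range_two_mul hQ hx] at h
  exact mul_left_cancel₀ (div_ne_zero (pow_ne_zero _ hx) (pow_ne_zero _ hQ)) h

end FiniteTripleProduct

section QBinomialLimit

variable {q : ℂ}

lemma one_sub_pow_succ_ne_zero (hq : ‖q‖ < 1) (n : ℕ) : 1 - q ^ (n + 1) ≠ 0 := by
  refine sub_ne_zero.mpr fun h => ?_
  have : ‖q ^ (n + 1)‖ < 1 := by
    rw [norm_pow]; exact pow_lt_one₀ (norm_nonneg q) hq n.succ_ne_zero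
  rw [← h, norm_one] at this
  exact this.false

lemma qFactorial_ne_zero (hq : ‖q‖ < 1) (n : ℕ) : qFactorial q n ≠ 0 :=
  prod_ne_zero_iff.mpr fun i _ => one_sub_pow_succ_ne_zero hq i

lemma tprod_one_sub_pow_succ_ne_zero (hq : ‖q‖ < 1) : ∏' n : ℕ, (1 - q ^ (n + 1)) ≠ 0 := by
  simp_rw [sub_eq_add_neg]
  refine tprod_one_add_ne_zero_of_summable (fun n => ?_) ?_
  · rw [← sub_eq_add_neg]; exact one_sub_pow_succ_ne_zero hq n
  · simpa [norm_pow] using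
      (summable_nat_add_iff 1).mpr (summable_geometric_of_lt_one (norm_nonneg _) hq)

lemma tendsto_qFactorial (hq : ‖q‖ < 1) :
    Tendsto (qFactorial q) atTop (𝓝 (∏' n : ℕ, (1 - q ^ (n + 1)))) :=
  (ModularForm.multipliable_one_sub_pow hq).hasProd.tendsto_prod_nat

lemma qBinomial_eq_div (hq : ‖q‖ < 1) {m k : ℕ} (hkm : k ≤ m) :
    qBinomial q m k = qFactorial q m / (qFactorial q k * qFactorial q (m - k)) := by
  rw [eq_div_iff (mul_ne_zero (qFactorial_ne_zero hq k) (qFactorial_ne_zero hq (m - k)))]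
  simpa [Nat.add_sub_cancel' hkm] using qBinomial_add_mul_qFactorial q k (m - k)

lemma exists_norm_qBinomial_le (hq : ‖q‖ < 1) : ∃ C, ∀ m k, ‖qBinomial q m k‖ ≤ C := by
  obtain ⟨A, hA⟩ := isBounded_iff_forall_norm_le.mp
    (Metric.isBounded_range_of_tendsto _ (tendsto_qFactorial hq))
  obtain ⟨B, hB⟩ := isBounded_iff_forall_norm_le.mp (Metric.isBounded_range_of_tendsto _
    ((tendsto_qFactorial hq).inv₀ (tprod_one_sub_pow_succ_ne_zero hq)))
  have hA' : ∀ n, ‖qFactorial q n‖ ≤ A := fun n => hA _ ⟨n, rfl⟩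
  have hB' : ∀ n, ‖(qFactorial q n)⁻¹‖ ≤ B := fun n => hB _ ⟨n, rfl⟩
  have hA0 : 0 ≤ A := (norm_nonneg _).trans (hA' 0)
  have hB0 : 0 ≤ B := (norm_nonneg _).trans (hB' 0)
  refine ⟨A * (B * B), fun m k => ?_⟩
  rcases lt_or_ge m k with hmk | hkm
  · rw [qBinomial_eq_zero_of_lt q hmk, norm_zero]
    positivity
  · rw [qBinomial_eq_div hq hkm, div_eq_mul_inv, mul_inv, norm_mul, norm_mul]
    exact mul_le_mul (hA' m) (mul_le_mul (hB' k) (hB' _) (norm_nonneg _) hB0) (by positivity) hA0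

lemma tendsto_qBinomial_two_mul (hq : ‖q‖ < 1) (n : ℤ) :
    Tendsto (fun N : ℕ => qBinomial q (2 * N) (n + N).toNat) atTop
      (𝓝 (∏' k : ℕ, (1 - q ^ (k + 1)))⁻¹) := by
  set P := ∏' k : ℕ, (1 - q ^ (k + 1))
  have hP := tprod_one_sub_pow_succ_ne_zero hq
  have hlo : Tendsto (fun N : ℕ => (n + N).toNat) atTop atTop :=
    tendsto_atTop_mono (fun N => by omega) (tendsto_sub_atTop_nat n.natAbs)
  have hhi : Tendsto (fun N : ℕ => (N - n).toNat) atTop atTop :=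
    tendsto_atTop_mono (fun N => by omega) (tendsto_sub_atTop_nat n.natAbs)
  have hlim := ((tendsto_qFactorial hq).comp (tendsto_id.const_mul_atTop' two_pos)).div
    (((tendsto_qFactorial hq).comp hlo).mul ((tendsto_qFactorial hq).comp hhi)) (mul_ne_zero hP hP)
  rw [show P / (P * P) = P⁻¹ by field_simp] at hlim
  refine hlim.congr' ?_
  filter_upwards [eventually_ge_atTop n.natAbs] with N hN
  rw [qBinomial_eq_div hq (by omega), show 2 * N - (n + N).toNat = (N - n).toNat by omega]
  rfl

theorem tendsto_sum_qBinomial_mul (hq : ‖q‖ < 1) {g : ℤ → ℂ}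
    (hg : Summable fun n => ‖g n‖) :
    Tendsto (fun N : ℕ => ∑ n ∈ Icc (-N : ℤ) N, qBinomial q (2 * N) (n + N).toNat * g n)
      atTop
      (𝓝 ((∏' k : ℕ, (1 - q ^ (k + 1)))⁻¹ * ∑' n, g n)) := by
  obtain ⟨C, hC⟩ := exists_norm_qBinomial_le hq
  rw [← tsum_mul_left]
  refine (tendsto_tsum_of_dominated_convergence (hg.mul_left C) (fun n => ?_)
    (Eventually.of_forall fun N n => ?_)).congr fun N => (sum_eq_tsum_indicator
      (fun n : ℤ => qBinomial q (2 * N) (n + N).toNat * g n) (Icc (-N : ℤ) N)).symm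
  · refine ((tendsto_qBinomial_two_mul hq n).mul_const (g n)).congr' ?_
    filter_upwards [eventually_ge_atTop n.natAbs] with N hN
    rw [Set.indicator_of_mem (by simp only [coe_Icc, Set.mem_Icc]; omega)]
  · by_cases hn : n ∈ (Icc (-N : ℤ) N : Set ℤ)
    · rw [Set.indicator_of_mem hn, norm_mul]
      exact mul_le_mul_of_nonneg_right (hC _ _) (norm_nonneg _)
    · rw [Set.indicator_of_notMem hn, norm_zero]
      exact mul_nonneg ((norm_nonneg _).trans (hC 0 0)) (norm_nonneg _)

end QBinomialLimit

lemma multipliable_one_add_mul_pow {q : ℂ} (hq : ‖q‖ < 1) (c : ℂ) :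
    Multipliable fun n : ℕ => 1 + c * q ^ n :=
  Complex.multipliable_one_add_of_summable ((summable_geometric_of_norm_lt_one hq).mul_left c)

lemma multipliable_one_add_mul_pow_odd {Q : ℂ} (hQ : ‖Q‖ < 1) (c : ℂ) :
    Multipliable fun n : ℕ => 1 + c * Q ^ (2 * n + 1) := by
  have hQ2 : ‖Q ^ 2‖ < 1 := by rw [norm_pow]; exact pow_lt_one₀ (norm_nonneg Q) hQ two_ne_zero
  exact (multipliable_one_add_mul_pow hQ2 (c * Q)).congr fun n => by ring

lemma tprod_mul_eq_mul_tprod_mul_succ {M : Type*} [CommMonoid M] [TopologicalSpace M] [T2Space M]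
    [ContinuousMul M] {f g : ℕ → M} (hf : Multipliable f) (hg : Multipliable g)
    (hg' : Multipliable fun n => g (n + 1)) :
    ∏' n, f n * g n = g 0 * ∏' n, f n * g (n + 1) := by
  rw [hf.tprod_mul hg, hf.tprod_mul hg', tprod_eq_zero_mul' hg', mul_left_comm]

lemma cexp_pi_mul_I_sq (τ : ℂ) : cexp (π * I * τ) ^ 2 = cexp (2 * π * I * τ) := by
  rw [← exp_nat_mul]; push_cast; ring_nf

lemma norm_cexp_pi_mul_I_lt_one {τ : ℂ} (hτ : 0 < τ.im) : ‖cexp (π * I * τ)‖ < 1 := by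
  rw [norm_exp, Real.exp_lt_one_iff, show π * I * τ = (π * τ) * I by ring, mul_I_re,
    im_ofReal_mul, neg_neg_iff_pos]
  positivity

lemma jacobiTheta₂_term_eq_zpow (n : ℤ) (z τ : ℂ) :
    jacobiTheta₂_term n z τ = cexp (π * I * τ) ^ (n ^ 2) * cexp (2 * π * I * z) ^ n := by
  rw [jacobiTheta₂_term, ← exp_int_mul, ← exp_int_mul, ← Complex.exp_add]
  push_cast
  ring_nf

theorem jacobiTheta₂_eq_tprod (z : ℂ) {τ : ℂ} (hτ : 0 < τ.im) :
    jacobiTheta₂ z τ = ∏' n : ℕ, (1 - cexp (2 * π * I * τ) ^ (n + 1)) *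
      ((1 + cexp (2 * π * I * z) * cexp (π * I * τ) ^ (2 * n + 1)) *
        (1 + (cexp (2 * π * I * z))⁻¹ * cexp (π * I * τ) ^ (2 * n + 1))) := by
  have hQ := norm_cexp_pi_mul_I_lt_one hτ
  have hq : ‖cexp (2 * π * I * τ)‖ < 1 := UpperHalfPlane.norm_exp_two_pi_I_lt_one ⟨τ, hτ⟩
  have hpartial (N : ℕ) := prod_one_add_mul_pow_odd_eq_sum (exp_ne_zero (π * I * τ))
    (exp_ne_zero (2 * π * I * z)) N
  simp only [cexp_pi_mul_I_sq, ← jacobiTheta₂_term_eq_zpow] at hpartial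
  have hlim := tendsto_sum_qBinomial_mul hq
    (summable_norm_iff.mpr ((summable_jacobiTheta₂_term_iff z τ).mpr hτ))
  simp only [← hpartial] at hlim
  have hodd := (multipliable_one_add_mul_pow_odd hQ (cexp (2 * π * I * z))).mul
    (multipliable_one_add_mul_pow_odd hQ (cexp (2 * π * I * z))⁻¹)
  rw [Multipliable.tprod_mul (ModularForm.multipliable_one_sub_pow hq) hodd,
    tendsto_nhds_unique hodd.hasProd.tendsto_prod_nat hlim, ← mul_assoc,
    mul_inv_cancel₀ (tprod_one_sub_pow_succ_ne_zero hq), one_mul]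
  rfl

lemma JTheta2_eq_jacobiTheta₂ {τ : ℂ} (hτ : 0 < τ.im) (z : ℂ) :
    JTheta2 z τ = jacobiTheta₂ (z + 1 / 2) τ := by
  rw [jacobiTheta₂_eq_tprod _ hτ, JTheta2]
  refine tprod_congr fun n => ?_
  have hw : cexp (2 * π * I * (z + 1 / 2)) = -cexp (2 * π * I * z) := by
    rw [show 2 * π * I * (z + 1 / 2) = 2 * π * I * z + π * I by ring, exp_add, exp_pi_mul_I,
      mul_neg_one]
  have hodd : cexp (2 * π * I * τ * (n + 1 / 2)) = cexp (π * I * τ) ^ (2 * n + 1) := by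
    rw [← exp_nat_mul]; push_cast; ring_nf
  rw [JTheta2Factor, hw, hodd, exp_neg, inv_neg]
  ring

lemma JTheta1_eq_jacobiTheta₂ {τ : ℂ} (hτ : 0 < τ.im) (z : ℂ) :
    JTheta1 z τ = cexp (2 * π * I * τ / 8) * cexp (π * I * z) * jacobiTheta₂ (z + τ / 2) τ := by
  have hw : cexp (2 * π * I * (z + τ / 2)) = cexp (2 * π * I * z) * cexp (π * I * τ) := by
    rw [← exp_add]; ring_nf
  have hq1 : ‖cexp (2 * π * I * τ)‖ < 1 := UpperHalfPlane.norm_exp_two_pi_I_lt_one ⟨τ, hτ⟩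
  rw [jacobiTheta₂_eq_tprod _ hτ, hw, JTheta1]
  set q := cexp (2 * π * I * τ)
  set w := cexp (2 * π * I * z)
  have hfactor (n : ℕ) : (1 - q ^ (n + 1)) *
      ((1 + w * cexp (π * I * τ) * cexp (π * I * τ) ^ (2 * n + 1)) *
        (1 + (w * cexp (π * I * τ))⁻¹ * cexp (π * I * τ) ^ (2 * n + 1))) =
      ((1 - q ^ (n + 1)) * (1 + w * q ^ (n + 1))) * (1 + w⁻¹ * q ^ n) := by
    rw [← show cexp (π * I * τ) ^ 2 = q from cexp_pi_mul_I_sq τ]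
    field_simp
    ring
  -- Shifting `τ/2` moves one factor family by one index; its `n = 0` factor builds the cosine.
  have hcos : 2 * cos (π * z) = cexp (π * I * z) * (1 + w⁻¹) := by
    rw [two_cos, ← exp_neg, mul_add, mul_one, ← exp_add]
    ring_nf
  have hmain : Multipliable fun n : ℕ => (1 - q ^ (n + 1)) * (1 + w * q ^ (n + 1)) :=
    (ModularForm.multipliable_one_sub_pow hq1).mul
      ((multipliable_one_add_mul_pow hq1 (w * q)).congr fun n => by ring)
  have hsucc : Multipliable fun n : ℕ => 1 + w⁻¹ * q ^ (n + 1) :=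
    (multipliable_one_add_mul_pow hq1 (w⁻¹ * q)).congr fun n => by ring
  rw [tprod_congr hfactor,
    tprod_mul_eq_mul_tprod_mul_succ hmain (multipliable_one_add_mul_pow hq1 _) hsucc]
  have hJ (n : ℕ) : JTheta1Factor z τ n =
      (1 - q ^ (n + 1)) * (1 + w * q ^ (n + 1)) * (1 + w⁻¹ * q ^ (n + 1)) := by
    rw [JTheta1Factor, exp_neg]
  rw [tprod_congr hJ, pow_zero, mul_one]
  linear_combination (cexp (2 * π * I * τ / 8) *
    ∏' n : ℕ, (1 - q ^ (n + 1)) * (1 + w * q ^ (n + 1)) * (1 + w⁻¹ * q ^ (n + 1))) * hcos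

theorem jTheta1_S_transform (τ : ℂ) (hτ : 0 < τ.im) (v : ℂ) :
    JTheta1 v (-1 / τ) =
      (τ / I) ^ (1 / 2 : ℂ) * Complex.exp ((Real.pi : ℂ) * I * τ * v ^ 2) *
        JTheta2 (τ * v) τ := by
  have hτ0 : τ ≠ 0 := by rintro rfl; simp at hτ
  have hτ' : 0 < (-1 / τ).im := by
    rw [neg_div, neg_im, one_div, inv_im, neg_div, neg_neg]
    exact div_pos hτ (normSq_pos.mpr hτ0)
  have hroot : (τ / I) ^ (1 / 2 : ℂ) ≠ 0 := by
    rw [cpow_def_of_ne_zero (div_ne_zero hτ0 I_ne_zero)]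
    exact exp_ne_zero _
  have hexp : cexp (2 * π * I * (-1 / τ) / 8) * cexp (π * I * v) =
      cexp (π * I * τ * v ^ 2) * cexp (-π * I * (τ * v - 1 / 2) ^ 2 / τ) := by
    rw [← exp_add, ← exp_add]
    congr 1
    field_simp
    ring
  rw [JTheta1_eq_jacobiTheta₂ hτ', JTheta2_eq_jacobiTheta₂ hτ,
    show τ * v + 1 / 2 = τ * v - 1 / 2 + 1 by ring, jacobiTheta₂_add_left,
    jacobiTheta₂_functional_equation (τ * v - 1 / 2) τ,
    show (τ * v - 1 / 2) / τ = v + -1 / τ / 2 by field_simp; ring,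
    hexp, show -I * τ = τ / I by rw [div_I]; ring]
  field_simp
end

section
/- For every τ in the upper half-plane ℍ, the Jacobi derivative identity holds: θ'(0, τ) = π · θ₁(0, τ) · θ₂(0, τ) · θ₃(0, τ). -/
open Complex

/-!
Write `(a; q)_∞ = qPochhammer a q` and `q = e^{2πiτ}`, `s = e^{πiτ}`. Since `sin 0 = 0`, only the
derivative of `sin (π v)` survives at `v = 0`, so `θ'(0) = 2π q^{1/8} (q; q)³`. At `v = 0` the
theta functions factor as `θ₁ = 2 q^{1/8} (q; q) (-q; q)²`, `θ₂ = (q; q) (s; q)²`,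
`θ₃ = (q; q) (-s; q)²`, and the claim reduces to Euler's identity `(-q; q) (s; q) (-s; q) = 1`:
multiplying by `(q; q)` and pairing `a` with `-a` gives `(q; q²) (q²; q²)`, which is `(q; q)` split
into odd and even factors. Differentiability of the product in `v` follows from the locally
uniform convergence of `a ↦ (a; q)_∞`.
-/

open Real

noncomputable def qPochhammer {𝕜 : Type*} [NormedField 𝕜] (a q : 𝕜) : 𝕜 :=
  ∏' n : ℕ, (1 - a * q ^ n)

section QPochhammer

variable {𝕜 : Type*} [NormedField 𝕜] {q : 𝕜}

theorem summable_norm_mul_pow (a : 𝕜) (hq : ‖q‖ < 1) : Summable fun n : ℕ => ‖a * q ^ n‖ := by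
  simpa only [norm_mul, norm_pow] using
    (summable_geometric_of_lt_one (norm_nonneg q) hq).mul_left ‖a‖

variable [CompleteSpace 𝕜]

theorem multipliable_one_sub_mul_pow (a : 𝕜) (hq : ‖q‖ < 1) :
    Multipliable fun n : ℕ => 1 - a * q ^ n := by
  simpa only [sub_eq_add_neg] using
    multipliable_one_add_of_summable (f := fun n => -(a * q ^ n))
      (by simpa only [norm_neg] using summable_norm_mul_pow a hq)

theorem qPochhammer_ne_zero {a : 𝕜} (ha : ‖a‖ < 1) (hq : ‖q‖ < 1) : qPochhammer a q ≠ 0 := by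
  have hsmall (n : ℕ) : ‖a * q ^ n‖ < 1 := by
    rw [norm_mul, norm_pow]
    exact mul_lt_one_of_nonneg_of_lt_one_left (norm_nonneg a) ha
      (pow_le_one₀ (norm_nonneg q) hq.le)
  simpa only [qPochhammer, sub_eq_add_neg] using
    tprod_one_add_ne_zero_of_summable (f := fun n => -(a * q ^ n))
      (fun n h => (hsmall n).ne (by rw [show a * q ^ n = 1 by linear_combination -h, norm_one]))
      (by simpa only [norm_neg] using summable_norm_mul_pow a hq)

theorem qPochhammer_mul_qPochhammer_mul_qPochhammer (a b c : 𝕜) (hq : ‖q‖ < 1) :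
    qPochhammer a q * qPochhammer b q * qPochhammer c q =
      ∏' n : ℕ, ((1 - a * q ^ n) * (1 - b * q ^ n) * (1 - c * q ^ n)) := by
  rw [qPochhammer, qPochhammer, qPochhammer,
    ← (multipliable_one_sub_mul_pow a hq).tprod_mul (multipliable_one_sub_mul_pow b hq),
    ← ((multipliable_one_sub_mul_pow a hq).mul (multipliable_one_sub_mul_pow b hq)).tprod_mul
      (multipliable_one_sub_mul_pow c hq)]

theorem qPochhammer_mul_qPochhammer_neg (a : 𝕜) (hq : ‖q‖ < 1) :
    qPochhammer a q * qPochhammer (-a) q = qPochhammer (a ^ 2) (q ^ 2) := by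
  rw [qPochhammer, qPochhammer, qPochhammer,
    ← (multipliable_one_sub_mul_pow a hq).tprod_mul (multipliable_one_sub_mul_pow (-a) hq)]
  exact tprod_congr fun n => by ring

theorem qPochhammer_sq_mul_qPochhammer_sq (a : 𝕜) (hq : ‖q‖ < 1) :
    qPochhammer a (q ^ 2) * qPochhammer (a * q) (q ^ 2) = qPochhammer a q := by
  have hq2 : ‖q ^ 2‖ < 1 := by
    rw [norm_pow]
    exact pow_lt_one₀ (norm_nonneg q) hq two_ne_zero
  have h := tprod_even_mul_odd (f := fun n : ℕ => 1 - a * q ^ n)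
    ((multipliable_one_sub_mul_pow a hq2).congr fun n => by ring)
    ((multipliable_one_sub_mul_pow (a * q) hq2).congr fun n => by ring)
  rw [qPochhammer, qPochhammer, qPochhammer, ← h]
  congr 1 <;> exact tprod_congr fun n => by ring

theorem qPochhammer_neg_mul_qPochhammer_mul_qPochhammer_neg {s : 𝕜} (hs : s ^ 2 = q)
    (hq : ‖q‖ < 1) : qPochhammer (-q) q * qPochhammer s q * qPochhammer (-s) q = 1 := by
  have key : (qPochhammer (-q) q * qPochhammer s q * qPochhammer (-s) q) * qPochhammer q q =
      1 * qPochhammer q q :=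
    calc _ = (qPochhammer s q * qPochhammer (-s) q) * (qPochhammer q q * qPochhammer (-q) q) := by
            ring
      _ = qPochhammer q (q ^ 2) * qPochhammer (q * q) (q ^ 2) := by
            rw [qPochhammer_mul_qPochhammer_neg s hq, qPochhammer_mul_qPochhammer_neg q hq, hs, sq]
      _ = 1 * qPochhammer q q := by rw [qPochhammer_sq_mul_qPochhammer_sq q hq, one_mul]
  exact mul_right_cancel₀ (qPochhammer_ne_zero hq hq) key

end QPochhammer

theorem differentiable_qPochhammer {q : ℂ} (hq : ‖q‖ < 1) :
    Differentiable ℂ fun a => qPochhammer a q := by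
  intro a₀
  have hprod := Summable.hasProdLocallyUniformlyOn_nat_one_add
    (K := Metric.ball (0 : ℂ) (‖a₀‖ + 1)) (f := fun n a => -(a * q ^ n)) Metric.isOpen_ball
    ((summable_geometric_of_lt_one (norm_nonneg q) hq).mul_left (‖a₀‖ + 1))
    (.of_forall fun n a ha => by
      rw [norm_neg, norm_mul, norm_pow]
      exact mul_le_mul_of_nonneg_right (mem_ball_zero_iff.mp ha).le (by positivity))
    (fun n => by fun_prop)
  have hdiff := hprod.differentiableOn (.of_forall fun s => by
      simpa [Finset.prod_fn] using DifferentiableOn.finsetProd (fun _ _ => by fun_prop))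
    Metric.isOpen_ball
  simp only [← sub_eq_add_neg] at hdiff
  exact hdiff.differentiableAt (Metric.isOpen_ball.mem_nhds (by simp))

noncomputable def nome (τ : ℂ) : ℂ := cexp (2 * π * I * τ)

section JacobiTheta

variable {τ : ℂ}

theorem norm_nome_lt_one (hτ : 0 < τ.im) : ‖nome τ‖ < 1 :=
  UpperHalfPlane.norm_exp_two_pi_I_lt_one ⟨τ, hτ⟩

theorem nome_half_sq (τ : ℂ) : nome (τ / 2) ^ 2 = nome τ := by
  rw [nome, nome, ← Complex.exp_nat_mul]
  ring_nf

theorem cexp_two_pi_I_mul_add_half (τ : ℂ) (n : ℕ) :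
    cexp (2 * π * I * τ * (n + 1 / 2)) = nome (τ / 2) * nome τ ^ n := by
  rw [nome, nome, ← Complex.exp_nat_mul, ← Complex.exp_add]
  ring_nf

theorem tprod_jThetaFactor (hτ : 0 < τ.im) (v : ℂ) :
    ∏' n, JThetaFactor v τ n =
      qPochhammer (nome τ) (nome τ) * qPochhammer (cexp (2 * π * I * v) * nome τ) (nome τ) *
        qPochhammer (cexp (-(2 * π * I * v)) * nome τ) (nome τ) := by
  rw [qPochhammer_mul_qPochhammer_mul_qPochhammer _ _ _ (norm_nome_lt_one hτ)]
  exact tprod_congr fun n => by simp only [JThetaFactor, ← nome.eq_1]; ring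

theorem jTheta1_zero (hτ : 0 < τ.im) :
    JTheta1 0 τ = 2 * cexp (2 * π * I * τ / 8) *
      (qPochhammer (nome τ) (nome τ) * qPochhammer (-nome τ) (nome τ) *
        qPochhammer (-nome τ) (nome τ)) := by
  rw [JTheta1, qPochhammer_mul_qPochhammer_mul_qPochhammer _ _ _ (norm_nome_lt_one hτ)]
  simp only [mul_zero, Complex.cos_zero, mul_one]
  exact congrArg _ (tprod_congr fun n => by
    simp only [JTheta1Factor, mul_zero, neg_zero, Complex.exp_zero, one_mul, ← nome.eq_1]
    ring)

theorem jTheta2_zero (hτ : 0 < τ.im) :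
    JTheta2 0 τ = qPochhammer (nome τ) (nome τ) * qPochhammer (nome (τ / 2)) (nome τ) *
      qPochhammer (nome (τ / 2)) (nome τ) := by
  rw [JTheta2, qPochhammer_mul_qPochhammer_mul_qPochhammer _ _ _ (norm_nome_lt_one hτ)]
  exact tprod_congr fun n => by
    simp only [JTheta2Factor, mul_zero, neg_zero, Complex.exp_zero, one_mul, ← nome.eq_1,
      cexp_two_pi_I_mul_add_half]
    ring

theorem jTheta3_zero (hτ : 0 < τ.im) :
    JTheta3 0 τ = qPochhammer (nome τ) (nome τ) * qPochhammer (-nome (τ / 2)) (nome τ) *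
      qPochhammer (-nome (τ / 2)) (nome τ) := by
  rw [JTheta3, qPochhammer_mul_qPochhammer_mul_qPochhammer _ _ _ (norm_nome_lt_one hτ)]
  exact tprod_congr fun n => by
    simp only [JTheta3Factor, mul_zero, neg_zero, Complex.exp_zero, one_mul, ← nome.eq_1,
      cexp_two_pi_I_mul_add_half]
    ring

theorem differentiable_tprod_jThetaFactor (hτ : 0 < τ.im) :
    Differentiable ℂ fun v => ∏' n, JThetaFactor v τ n := by
  simp only [tprod_jThetaFactor hτ]
  have := differentiable_qPochhammer (norm_nome_lt_one hτ)
  fun_prop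

theorem hasDerivAt_jTheta_zero (hτ : 0 < τ.im) :
    HasDerivAt (fun v => JTheta v τ)
      (2 * cexp (2 * π * I * τ / 8) * π * qPochhammer (nome τ) (nome τ) ^ 3) 0 := by
  have hsin : HasDerivAt (fun v : ℂ => Complex.sin (π * v)) π 0 := by
    simpa using ((hasDerivAt_id (0 : ℂ)).const_mul (π : ℂ)).csin
  have h := (hsin.const_mul (2 * cexp (2 * π * I * τ / 8))).fun_mul
    ((differentiable_tprod_jThetaFactor hτ) 0).hasDerivAt
  refine h.congr_deriv ?_
  simp only [mul_zero, Complex.sin_zero, zero_mul, add_zero, tprod_jThetaFactor hτ, neg_zero,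
    Complex.exp_zero, one_mul]
  ring

end JacobiTheta

theorem jacobi_derivative_identity (τ : ℂ) (hτ : 0 < τ.im) :
    deriv (fun w => JTheta w τ) 0 =
      (Real.pi : ℂ) * JTheta1 0 τ * JTheta2 0 τ * JTheta3 0 τ := by
  have euler := qPochhammer_neg_mul_qPochhammer_mul_qPochhammer_neg (nome_half_sq τ)
    (norm_nome_lt_one hτ)
  rw [(hasDerivAt_jTheta_zero hτ).deriv, jTheta1_zero hτ, jTheta2_zero hτ, jTheta3_zero hτ]
  linear_combination (-(2 * cexp (2 * π * I * τ / 8) * π * qPochhammer (nome τ) (nome τ) ^ 3 *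
    (qPochhammer (-nome τ) (nome τ) * qPochhammer (nome (τ / 2)) (nome τ) *
      qPochhammer (-nome (τ / 2)) (nome τ) + 1))) * euler
end
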